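/- Let b₁, …, b₆, c₁, …, c₆, s₁, …, s₆ be real numbers satisfying: b₁² + b₃² + b₅² + (c₆b₆)² = b₂² + b₄² + b₆² + (c₃b₃)², c₂b₂ + c₃b₃ = c₅b₅ + c₆b₆, b₂c₁ = b₃, b₂c₃ = b₁, b₅c₄ = b₆, b₅c₆ = b₄, s₂ = s₃ = s₅ = s₆ = 0, and s₁ = s₄. Then the following equalities of polynomials in ℂ[x] hold: Q₁⁺ = Q₄⁺, Q₂⁺ = Q₅⁺, Q₃⁺ = Q₆⁺, Q₃⁻ = Q₆⁻ and Q₂⁻ = Q₅⁻. -/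

import Mathlib

open Polynomial

noncomputable section

/-- The quad polynomial `Qᵢ⁺`, with 0-based indexing: `Qp b c s i` is `Q_{i+1}⁺` of the
parameters `b₁,…,b₆ = b 0,…,b 5`, etc. (indices mod 6). -/
def Qp (b c s : Fin 6 → ℝ) (i : Fin 6) : Polynomial ℂ :=
  (X + C (((b (i+2) * c (i+2) - b i * c i : ℝ) : ℂ) / 2 - ((s i : ℝ) : ℂ) / 2 * Complex.I))^2
  + C (Complex.I / 2 * ((b i * s (i+1) + b (i+2) * s (i+2) + s (i+1) * b (i+2) * c (i+1)
        + s (i+2) * b i * c (i+1) : ℝ) : ℂ)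
      - ((b i * b (i+2) * c (i+1) - s (i+1) * s (i+2) * c (i+1) : ℝ) : ℂ) / 2
      + (((s (i+1))^2 + (s (i+2))^2 - (b i)^2 + (b (i+1))^2 - (b (i+2))^2
        - (b (i+1))^2 * (c (i+1))^2 : ℝ) : ℂ) / 4)

/-- The quad polynomial `Qᵢ⁻`: obtained from `Qᵢ⁺` by negating all `b j`, all `c j`,
and `s₂, s₄, s₆` (the `s j` with odd 0-based index `j`), keeping `s₁, s₃, s₅`. -/
def Qm (b c s : Fin 6 → ℝ) (i : Fin 6) : Polynomial ℂ :=
  Qp (fun j => -b j) (fun j => -c j) (fun j => if j.val % 2 = 1 then -s j else s j) i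

/-! Each `Qᵢ^±` is a monic quadratic `(X + α)² + β`, so an equality of two of them amounts to four
real identities: the real and imaginary parts of `α` and of `β`. The relations `b₂c₁ = b₃`,
`b₂c₃ = b₁`, `b₅c₄ = b₆`, `b₅c₆ = b₄` and the vanishing of `s₂, s₃, s₅, s₆` express all parameters
through `b₂, b₅`, the `cᵢ` and `s₁ = s₄`; in these terms the two remaining equations become
`b₂ (c₂ + c₁ c₃) = b₅ (c₅ + c₄ c₆)` and `b₂² (1 - c₁²)(1 - c₃²) = b₅² (1 - c₄²)(1 - c₆²)`, and each
of the twenty identities follows from these two by `linear_combination`. -/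

def QpShiftRe (b c : Fin 6 → ℝ) (i : Fin 6) : ℝ := b (i+2) * c (i+2) - b i * c i

def QpConstRe (b c s : Fin 6 → ℝ) (i : Fin 6) : ℝ :=
  s (i+1) ^ 2 + s (i+2) ^ 2 - b i ^ 2 + b (i+1) ^ 2 - b (i+2) ^ 2 - b (i+1) ^ 2 * c (i+1) ^ 2
    - 2 * (b i * b (i+2) * c (i+1) - s (i+1) * s (i+2) * c (i+1))

def QpConstIm (b c s : Fin 6 → ℝ) (i : Fin 6) : ℝ :=
  b i * s (i+1) + b (i+2) * s (i+2) + s (i+1) * b (i+2) * c (i+1) + s (i+2) * b i * c (i+1)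

theorem Qp_eq_sq_add_C (b c s : Fin 6 → ℝ) (i : Fin 6) :
    Qp b c s i = (X + C ((QpShiftRe b c i : ℂ) / 2 - (s i : ℂ) / 2 * Complex.I)) ^ 2
      + C ((QpConstRe b c s i : ℂ) / 4 + Complex.I / 2 * (QpConstIm b c s i : ℂ)) := by
  unfold Qp QpShiftRe
  congr 2
  simp only [QpConstRe, QpConstIm]
  push_cast
  ring

theorem Qp_eq_Qp_of {b c s : Fin 6 → ℝ} {i j : Fin 6}
    (hshift : QpShiftRe b c i = QpShiftRe b c j) (hs : s i = s j)
    (hre : QpConstRe b c s i = QpConstRe b c s j)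
    (him : QpConstIm b c s i = QpConstIm b c s j) :
    Qp b c s i = Qp b c s j := by
  rw [Qp_eq_sq_add_C, Qp_eq_sq_add_C, hshift, hs, hre, him]

structure IsNewLinkage (b c s : Fin 6 → ℝ) : Prop where
  sum_sq : b 0 ^ 2 + b 2 ^ 2 + b 4 ^ 2 + (c 5 * b 5) ^ 2 =
    b 1 ^ 2 + b 3 ^ 2 + b 5 ^ 2 + (c 2 * b 2) ^ 2
  sum_mul : c 1 * b 1 + c 2 * b 2 = c 4 * b 4 + c 5 * b 5
  mul_c_zero : b 1 * c 0 = b 2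
  mul_c_two : b 1 * c 2 = b 0
  mul_c_three : b 4 * c 3 = b 5
  mul_c_five : b 4 * c 5 = b 3
  s_one : s 1 = 0
  s_two : s 2 = 0
  s_four : s 4 = 0
  s_five : s 5 = 0
  s_zero : s 0 = s 3

namespace IsNewLinkage

variable {b c s : Fin 6 → ℝ}

theorem b_eq (h : IsNewLinkage b c s) :
    b = ![b 1 * c 2, b 1, b 1 * c 0, b 4 * c 5, b 4, b 4 * c 3] := by
  ext i
  fin_cases i <;> simp [h.mul_c_zero, h.mul_c_two, h.mul_c_three, h.mul_c_five]

theorem s_eq (h : IsNewLinkage b c s) : s = ![s 3, 0, 0, s 3, 0, 0] := by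
  ext i
  fin_cases i <;> simp [h.s_one, h.s_two, h.s_four, h.s_five, h.s_zero]

theorem alternating_s_eq (h : IsNewLinkage b c s) :
    (fun j : Fin 6 => if j.val % 2 = 1 then -s j else s j) = ![s 3, 0, 0, -s 3, 0, 0] := by
  ext j
  fin_cases j <;> simp [h.s_one, h.s_two, h.s_four, h.s_five, h.s_zero]

theorem mul_eq (h : IsNewLinkage b c s) : b 1 * (c 1 + c 0 * c 2) = b 4 * (c 4 + c 3 * c 5) := by
  linear_combination h.sum_mul + c 2 * h.mul_c_zero - c 5 * h.mul_c_three

theorem sq_mul_eq (h : IsNewLinkage b c s) :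
    b 1 ^ 2 * (1 - c 0 ^ 2) * (1 - c 2 ^ 2) = b 4 ^ 2 * (1 - c 3 ^ 2) * (1 - c 5 ^ 2) := by
  have hsq := h.sum_sq
  rw [← h.mul_c_zero, ← h.mul_c_two, ← h.mul_c_three, ← h.mul_c_five] at hsq
  linear_combination -hsq

theorem Qp_zero_eq_Qp_three (h : IsNewLinkage b c s) : Qp b c s 0 = Qp b c s 3 := by
  rw [h.b_eq, h.s_eq]
  apply Qp_eq_Qp_of <;> simp only [QpShiftRe, QpConstRe, QpConstIm, Fin.reduceAdd, Matrix.cons_val]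
  · ring
  · linear_combination h.sq_mul_eq - (b 1 * (c 1 + c 0 * c 2) + b 4 * (c 4 + c 3 * c 5)) * h.mul_eq
  · ring

theorem Qp_one_eq_Qp_four (h : IsNewLinkage b c s) : Qp b c s 1 = Qp b c s 4 := by
  rw [h.b_eq, h.s_eq]
  apply Qp_eq_Qp_of <;> simp only [QpShiftRe, QpConstRe, QpConstIm, Fin.reduceAdd, Matrix.cons_val]
  · linear_combination -h.mul_eq
  · linear_combination -h.sq_mul_eq
  · ring

theorem Qp_two_eq_Qp_five (h : IsNewLinkage b c s) : Qp b c s 2 = Qp b c s 5 := by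
  rw [h.b_eq, h.s_eq]
  apply Qp_eq_Qp_of <;> simp only [QpShiftRe, QpConstRe, QpConstIm, Fin.reduceAdd, Matrix.cons_val]
  · linear_combination -h.mul_eq
  · linear_combination h.sq_mul_eq
  · ring

theorem Qm_two_eq_Qm_five (h : IsNewLinkage b c s) : Qm b c s 2 = Qm b c s 5 := by
  unfold Qm
  rw [h.alternating_s_eq, h.b_eq]
  apply Qp_eq_Qp_of <;> simp only [QpShiftRe, QpConstRe, QpConstIm, Fin.reduceAdd, Matrix.cons_val]
  · linear_combination -h.mul_eq
  · linear_combination h.sq_mul_eq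
  · ring

theorem Qm_one_eq_Qm_four (h : IsNewLinkage b c s) : Qm b c s 1 = Qm b c s 4 := by
  unfold Qm
  rw [h.alternating_s_eq, h.b_eq]
  apply Qp_eq_Qp_of <;> simp only [QpShiftRe, QpConstRe, QpConstIm, Fin.reduceAdd, Matrix.cons_val]
  · linear_combination -h.mul_eq
  · linear_combination -h.sq_mul_eq
  · ring

end IsNewLinkage

/-- The equations defining the new family of mobile 6R linkages imply the quad-polynomial
equalities `Q₁⁺ = Q₄⁺`, `Q₂⁺ = Q₅⁺`, `Q₃⁺ = Q₆⁺`, `Q₃⁻ = Q₆⁻` and `Q₂⁻ = Q₅⁻`. -/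
theorem new_linkage_implies_quad_equalities (b c s : Fin 6 → ℝ)
    (h1 : (b 0)^2 + (b 2)^2 + (b 4)^2 + (c 5 * b 5)^2 =
          (b 1)^2 + (b 3)^2 + (b 5)^2 + (c 2 * b 2)^2)
    (h2 : c 1 * b 1 + c 2 * b 2 = c 4 * b 4 + c 5 * b 5)
    (h3 : b 1 * c 0 = b 2) (h4 : b 1 * c 2 = b 0)
    (h5 : b 4 * c 3 = b 5) (h6 : b 4 * c 5 = b 3)
    (hs2 : s 1 = 0) (hs3 : s 2 = 0) (hs5 : s 4 = 0) (hs6 : s 5 = 0)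
    (hs14 : s 0 = s 3) :
    Qp b c s 0 = Qp b c s 3 ∧ Qp b c s 1 = Qp b c s 4 ∧ Qp b c s 2 = Qp b c s 5 ∧
    Qm b c s 2 = Qm b c s 5 ∧ Qm b c s 1 = Qm b c s 4 := by
  have h : IsNewLinkage b c s := ⟨h1, h2, h3, h4, h5, h6, hs2, hs3, hs5, hs6, hs14⟩
  exact ⟨h.Qp_zero_eq_Qp_three, h.Qp_one_eq_Qp_four, h.Qp_two_eq_Qp_five,
    h.Qm_two_eq_Qm_five, h.Qm_one_eq_Qm_four⟩
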